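/- arXiv:math/0501526 — 3 statements merged into one kernel-verified Lean document; each statement's English description precedes it below -/
import Mathlib

section
/- Suppose ⟨C_α : α < κ⟩ is a coherent sequence on a regular cardinal κ > ω₁, i.e., C_{α+1} = {α}, C_α ⊆ α is club in α for limit α, and C_α = C_β ∩ α whenever α is a limit point of C_β. If there is a cofinal set S ⊆ κ such that for all limit points α < β of S we have C_α = C_β ∩ α, then the sequence is trivial: the union C of the C_α for α a limit point of S is a club in κ with C_α = C ∩ α for every limit point α of C. -/
noncomputable section

open Set

/-- The order type of a set of ordinals. -/
def otp (s : Set Ordinal) : Ordinal := Ordinal.type ((· < ·) : s → s → Prop)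

/-- `collapse M α` is `π_M(α)`: the image of `α` under the transitive collapse of `M`,
computed as the order type of `M ∩ α`. -/
def collapse (M : Set Ordinal) (α : Ordinal) : Ordinal := otp (M ∩ Set.Iio α)

/-- The weight function `w(N,M) = |sup(N) ∩ π_M⁻¹[C_{otp(M)}]|` relative to a
ladder system `C`. -/
def w (C : Ordinal → Set Ordinal) (N M : Set Ordinal) : Cardinal :=
  Cardinal.mk {α : Ordinal // α ∈ M ∧ α < sSup N ∧ collapse M α ∈ C (otp M)}

/-- `ω₁` as an ordinal. -/
def ω1 : Ordinal := (Cardinal.aleph 1).ord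

/-- `ω₂` as an ordinal. -/
def ω2 : Ordinal := (Cardinal.aleph 2).ord

/-- A ladder system: to each countable limit ordinal `ξ` it assigns a cofinal
subset of `ξ` of order type `ω`. -/
def IsLadder (C : Ordinal → Set Ordinal) : Prop :=
  ∀ ξ, ξ < ω1 → Order.IsSuccLimit ξ →
    C ξ ⊆ Set.Iio ξ ∧ (∀ β < ξ, ∃ γ ∈ C ξ, β < γ) ∧ otp (C ξ) = Ordinal.omega0

/-- `α` is a limit point of the set of ordinals `C`. -/
def IsLimitPt (C : Set Ordinal) (α : Ordinal) : Prop := 0 < α ∧ α = sSup (C ∩ Set.Iio α)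

/-- `C` is closed and cofinal (club) in `β`. -/
def IsClubIn (C : Set Ordinal) (β : Ordinal) : Prop :=
  C ⊆ Set.Iio β ∧ (∀ γ < β, ∃ ξ ∈ C, γ ≤ ξ) ∧ ∀ γ < β, IsLimitPt C γ → γ ∈ C

/-- A coherent sequence on `κo`: `C_{α+1} = {α}`, `C_α` is club in `α` for limit `α`,
and `C_α = C_β ∩ α` whenever `α` is a limit point of `C_β`. -/
def IsCoherentSeq (κo : Ordinal) (C : Ordinal → Set Ordinal) : Prop :=
  (∀ α : Ordinal, α + 1 < κo → C (α + 1) = {α}) ∧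
  (∀ α, α < κo → Order.IsSuccLimit α → IsClubIn (C α) α) ∧
  (∀ α β, β < κo → IsLimitPt (C β) α → C α = C β ∩ Set.Iio α)

/-- A `□(κ)`-sequence: a coherent sequence admitting no trivializing club. -/
def IsSquareSeq (κo : Ordinal) (C : Ordinal → Set Ordinal) : Prop :=
  IsCoherentSeq κo C ∧
    ¬ ∃ D, IsClubIn D κo ∧ ∀ α, α < κo → IsLimitPt D α → C α = D ∩ Set.Iio α

-- auxiliary: a limit point is a limit ordinal
lemma limitPt_isLimit {A : Set Ordinal} {α : Ordinal} (h : IsLimitPt A α) : Order.IsSuccLimit α := by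
  obtain ⟨h0, hsup⟩ := h
  rw [Ordinal.isSuccLimit_iff, Order.isSuccPrelimit_iff_succ_lt]
  refine ⟨h0.ne', fun β hβ => ?_⟩
  have hne : (A ∩ Set.Iio α).Nonempty := by
    by_contra hemp
    rw [Set.not_nonempty_iff_eq_empty.mp hemp] at hsup
    simp [sSup_empty] at hsup
    exact h0.ne' hsup
  have : β < sSup (A ∩ Set.Iio α) := hsup ▸ hβ
  obtain ⟨x, hx, hbx⟩ := (lt_csSup_iff' Ordinal.bddAbove_of_small).mp this
  exact lt_of_le_of_lt (Order.add_one_le_of_lt hbx) hx.2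


/-- a coherent sequence which coheres on the limit points of a cofinal
set `S` is trivial: the union of the `C_α` over limit points `α` of `S` is a club `C`
in `κ` with `C_α = C ∩ α` for every limit point `α` of `C`. -/
theorem coherent_trivial_of_cofinal_coherence
    (κ : Cardinal) (hreg : κ.IsRegular) (hκ : Cardinal.aleph 1 < κ)
    (C : Ordinal → Set Ordinal) (hcoh : IsCoherentSeq κ.ord C)
    (S : Set Ordinal) (hS : S ⊆ Set.Iio κ.ord)
    (hScof : ∀ β < κ.ord, ∃ γ ∈ S, β ≤ γ)
    (hpair : ∀ α β, α < β → β < κ.ord → IsLimitPt S α → IsLimitPt S β →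
      C α = C β ∩ Set.Iio α) :
    IsClubIn (⋃ α ∈ {α | α < κ.ord ∧ IsLimitPt S α}, C α) κ.ord ∧
    ∀ α, α < κ.ord → IsLimitPt (⋃ α ∈ {α | α < κ.ord ∧ IsLimitPt S α}, C α) α →
      C α = (⋃ α ∈ {α | α < κ.ord ∧ IsLimitPt S α}, C α) ∩ Set.Iio α := by
  set T : Set Ordinal := {α | α < κ.ord ∧ IsLimitPt S α} with hT
  set D : Set Ordinal := ⋃ α ∈ T, C α with hD
  have hκord : Order.IsSuccLimit κ.ord := Cardinal.isSuccLimit_ord hreg.aleph0_le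
  -- step function
  have step : ∀ β : Ordinal, β < κ.ord → ∃ s ∈ S, β < s := by
    intro β hβ
    obtain ⟨s, hs, hle⟩ := hScof (β + 1) (hκord.add_one_lt hβ)
    exact ⟨s, hs, lt_of_lt_of_le (Order.lt_add_one_iff.mpr le_rfl) hle⟩
  -- T is unbounded
  have hTub : ∀ γ < κ.ord, ∃ α ∈ T, γ < α := by
    intro γ hγ
    choose g hgS hglt using fun β (h : β < κ.ord) => step β h
    -- iterate
    have key : ∀ β : Ordinal, β < κ.ord → ∃ f : ℕ → Ordinal,
        f 0 = β ∧ (∀ n, f n < κ.ord) ∧ ∀ n, f (n+1) ∈ S ∧ f n < f (n+1) := by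
      intro β hβ
      refine ⟨fun n => Nat.rec β (fun _ x => if h : x < κ.ord then g x h else 0) n, rfl, ?_, ?_⟩
      · intro n
        induction n with
        | zero => exact hβ
        | succ n ih => simpa [ih] using hS (hgS _ ih)
      · intro n
        induction n with
        | zero => simpa [hβ] using ⟨hgS β hβ, hglt β hβ⟩
        | succ n ih =>
          have hlt : (Nat.rec β (fun _ x => if h : x < κ.ord then g x h else 0) (n+1) : Ordinal)
              < κ.ord := hS ih.1
          simpa [hlt] using ⟨hgS _ hlt, hglt _ hlt⟩
    obtain ⟨f, hf0, hfκ, hfS⟩ := key γ hγ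
    have hmono : StrictMono f := strictMono_nat_of_lt_succ fun n => (hfS n).2
    set α := ⨆ n, f n with hα
    have hbdd : BddAbove (Set.range f) := Ordinal.bddAbove_of_small
    have hle : ∀ n, f n ≤ α := fun n => le_ciSup hbdd n
    have hflt : ∀ n, f n < α := fun n => lt_of_lt_of_le (hmono (Nat.lt_succ_self n)) (hle (n+1))
    have hακ : α < κ.ord := by
      rw [hα]
      refine Ordinal.iSup_lt_ord_lift ?_ hfκ
      rw [Cardinal.mk_nat, Cardinal.lift_aleph0, hreg.cof_eq]
      exact lt_of_le_of_lt (Cardinal.aleph0_le_aleph 1) hκ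
    have hγα : γ < α := hf0 ▸ hflt 0
    refine ⟨α, ⟨hακ, lt_of_le_of_lt (zero_le (a := γ)) hγα, ?_⟩, hγα⟩
    apply le_antisymm
    · -- α ≤ sSup (S ∩ Iio α)
      rw [hα]
      apply ciSup_le
      intro n
      exact le_trans (le_of_lt (hfS n).2) (le_csSup Ordinal.bddAbove_of_small ⟨(hfS n).1, hflt (n+1)⟩)
    · exact csSup_le ⟨f 1, (hfS 0).1, hflt 1⟩ fun x hx => le_of_lt hx.2
  -- C α ⊆ Iio α for α ∈ T
  have hCsub : ∀ α ∈ T, C α ⊆ Set.Iio α := fun α hα =>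
    (hcoh.2.1 α hα.1 (limitPt_isLimit hα.2)).1
  -- monotonicity of union: D ∩ Iio γ = C α ∩ Iio γ for α ∈ T, γ ≤ α
  have hkey : ∀ γ, ∀ α ∈ T, γ ≤ α → D ∩ Set.Iio γ = C α ∩ Set.Iio γ := by
    intro γ α hα hγα
    ext ξ
    constructor
    · rintro ⟨hξD, hξγ⟩
      simp only [hD, Set.mem_iUnion] at hξD
      obtain ⟨β, hβ, hξβ⟩ := hξD
      refine ⟨?_, hξγ⟩
      rcases lt_trichotomy β α with h | h | h
      · have := hpair β α h hα.1 hβ.2 hα.2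
        exact (this ▸ hξβ).1
      · exact h ▸ hξβ
      · have := hpair α β h hβ.1 hα.2 hβ.2
        rw [this]
        exact ⟨hξβ, lt_of_lt_of_le hξγ hγα⟩
    · rintro ⟨hξC, hξγ⟩
      exact ⟨Set.mem_biUnion hα hξC, hξγ⟩
  have hDsub : D ⊆ Set.Iio κ.ord := by
    intro ξ hξ
    simp only [hD, Set.mem_iUnion] at hξ
    obtain ⟨β, hβ, hξβ⟩ := hξ
    exact lt_trans (hCsub β hβ hξβ) hβ.1
  have hDlim : ∀ γ < κ.ord, IsLimitPt D γ → γ ∈ D := by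
    intro γ hγ hlp
    obtain ⟨α, hα, hγα⟩ := hTub γ hγ
    have heq := hkey γ α hα (le_of_lt hγα)
    have hlpC : IsLimitPt (C α) γ := by
      have h2 := hlp.2
      rw [heq] at h2
      exact ⟨hlp.1, h2⟩
    have hmem := (hcoh.2.1 α hα.1 (limitPt_isLimit hα.2)).2.2 γ hγα hlpC
    exact Set.mem_biUnion hα hmem
  refine ⟨⟨hDsub, ?_, hDlim⟩, ?_⟩
  · -- cofinal
    intro γ hγ
    obtain ⟨α, hα, hγα⟩ := hTub γ hγ
    obtain ⟨ξ, hξ, hγξ⟩ := (hcoh.2.1 α hα.1 (limitPt_isLimit hα.2)).2.1 γ hγα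
    exact ⟨ξ, Set.mem_biUnion hα hξ, hγξ⟩
  · -- coherence with D
    intro α hα hlp
    obtain ⟨β, hβ, hαβ⟩ := hTub α hα
    have heq := hkey α β hβ (le_of_lt hαβ)
    have hlpC : IsLimitPt (C β) α := by
      have h2 := hlp.2
      rw [heq] at h2
      exact ⟨hlp.1, h2⟩
    rw [hcoh.2.2 α β hβ.1 hlpC, heq]
end
end

section
/- Let M be a countable set of ordinals closed under a fixed ladder system in the sense that otp(M ∩ ω₁) is a limit ordinal δ. If N ⊆ M is countable with sup(N) < sup(M), and x is the finite set (N ∩ π_M⁻¹[C_{otp(M)}] below sup(N)) together with one element of N above max of that finite set, then for every Y with x ⊆ Y ⊆ N we have w(Y, M) = w(N, M). -/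
noncomputable section

open Set

/-- the weight `w(·,M)` is constant on the Ellentuck neighborhood
`[x,N]` of `N`, where `x` consists of the (finite) trace of the ladder of `M` below
`sup(N)` intersected with `N`, together with one element `ξ` of `N` above that trace. -/
theorem weight_locally_constant
    (C : Ordinal → Set Ordinal) (hC : IsLadder C)
    (M : Set Ordinal) (hMc : M.Countable) (hMlim : Order.IsSuccLimit (otp M))
    (N : Set Ordinal) (hNM : N ⊆ M) (hNc : N.Countable) (hsup : sSup N < sSup M)
    (hfin : {α | α ∈ M ∧ α < sSup N ∧ collapse M α ∈ C (otp M)}.Finite)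
    (ξ : Ordinal) (hξN : ξ ∈ N)
    (hξ : ∀ α ∈ {α | α ∈ M ∧ α < sSup N ∧ collapse M α ∈ C (otp M)}, α < ξ) :
    ∀ Y : Set Ordinal,
      (N ∩ {α | α ∈ M ∧ α < sSup N ∧ collapse M α ∈ C (otp M)}) ∪ {ξ} ⊆ Y →
      Y ⊆ N → w C Y M = w C N M := by
  intro Y hxY hYN
  have hNb : BddAbove N := by haveI := hNc.to_subtype; exact Ordinal.bddAbove_of_small
  have hYb : BddAbove Y := hNb.mono hYN
  have hξY : ξ ∈ Y := hxY (Or.inr rfl)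
  have hYle : sSup Y ≤ sSup N := csSup_le_csSup hNb ⟨ξ, hξY⟩ hYN
  have hξle : ξ ≤ sSup Y := le_csSup hYb hξY
  have hset : ∀ α : Ordinal, (α ∈ M ∧ α < sSup Y ∧ collapse M α ∈ C (otp M)) ↔
      (α ∈ M ∧ α < sSup N ∧ collapse M α ∈ C (otp M)) := by
    intro α
    constructor
    · rintro ⟨h1, h2, h3⟩; exact ⟨h1, h2.trans_le hYle, h3⟩
    · rintro ⟨h1, h2, h3⟩
      exact ⟨h1, (hξ α ⟨h1, h2, h3⟩).trans_le hξle, h3⟩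
  exact Cardinal.mk_congr (Equiv.subtypeEquivRight hset)
end
end

section
/- Assume υ_AC: for every A ⊆ ω₁ there exist an uncountable δ < ω₂ and an increasing continuous sequence ⟨N_ξ : ξ < ω₁⟩ club in [δ]^ω such that for all limit ν < ω₁ there is ν₀ < ν with: for all ξ ∈ (ν₀,ν), N_ν ∩ ω₁ ∈ A iff w(N_ξ ∩ ω₁, N_ν ∩ ω₁) < w(N_ξ, N_ν). Then the map sending the NS-equivalence class [A] to the least such δ = δ_[A] is well-defined (independent of representative) and injective from P(ω₁)/NS into ω₂; consequently 2^{ω₁} = ω₂. -/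
noncomputable section

open Set

universe u

/-- `δ` together with some increasing continuous sequence `⟨N_ξ : ξ < ω₁⟩` club in
`[δ]^ω` witnesses `υ_AC(A)`; `e ξ` is the ordinal `N_ξ ∩ ω₁`. -/
def UpsilonWitness (C : Ordinal.{u+1} → Set Ordinal.{u+1}) (A : Set Ordinal.{u})
    (δ : Ordinal.{u}) : Prop :=
  ∃ N : Ordinal.{u} → Set Ordinal.{u}, ∃ e : Ordinal.{u} → Ordinal.{u},
    (∀ ξ < ω1, (N ξ).Countable ∧ N ξ ⊆ Set.Iio δ) ∧
    (∀ ξ μ, ξ < μ → μ < ω1 → N ξ ⊆ N μ) ∧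
    (∀ ν, ν < ω1 → Order.IsSuccLimit ν → N ν = ⋃ ξ ∈ Set.Iio ν, N ξ) ∧
    (⋃ ξ ∈ Set.Iio ω1, N ξ) = Set.Iio δ ∧
    (∀ ξ < ω1, N ξ ∩ Set.Iio ω1 = Set.Iio (e ξ)) ∧
    (∀ ν, ν < ω1 → Order.IsSuccLimit ν → ∃ ν₀ < ν, ∀ ξ, ν₀ < ξ → ξ < ν →
      (e ν ∈ A ↔ w C (N ξ ∩ Set.Iio ω1) (N ν ∩ Set.Iio ω1) < w C (N ξ) (N ν)))

-- ## Basic facts about ω1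

theorem omega1_isLimit : Order.IsSuccLimit ω1.{u} := Cardinal.isSuccLimit_ord (Cardinal.aleph0_le_aleph 1)

theorem omega1_pos : (0:Ordinal.{u}) < ω1 := omega1_isLimit.pos

theorem lt_omega1_iff_card {o : Ordinal.{u}} : o < ω1 ↔ o.card ≤ Cardinal.aleph0 := by
  rw [ω1, Cardinal.lt_ord, ← Cardinal.succ_aleph0, Order.lt_succ_iff]

theorem countable_Iio_of_lt {o : Ordinal.{u}} (h : o < ω1) : (Set.Iio o).Countable := by
  rw [← Set.countable_coe_iff, ← Cardinal.mk_le_aleph0_iff, Ordinal.mk_Iio_ordinal]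
  rw [lt_omega1_iff_card] at h
  simpa [← Ordinal.lift_card, ← Cardinal.lift_aleph0.{u,u+1}, Cardinal.lift_le] using h

theorem lt_omega1_of_countable {o : Ordinal.{u}} (h : (Set.Iio o).Countable) : o < ω1 := by
  rw [← Set.countable_coe_iff, ← Cardinal.mk_le_aleph0_iff, Ordinal.mk_Iio_ordinal] at h
  rw [lt_omega1_iff_card]
  simpa [← Ordinal.lift_card, ← Cardinal.lift_aleph0.{u,u+1}, Cardinal.lift_le] using h

theorem omega1_cof : ω1.{u}.cof = Cardinal.aleph 1 := Cardinal.isRegular_aleph_one.cof_eq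

theorem bsup_lt_omega1 {o : Ordinal.{u}} (ho : o < ω1) (f : ∀ a < o, Ordinal.{u})
    (hf : ∀ a ha, f a ha < ω1) : Ordinal.bsup o f < ω1 := by
  apply Ordinal.bsup_lt_ord _ hf
  rw [omega1_cof]
  exact lt_omega1_iff_card.mp ho |>.trans_lt Cardinal.aleph0_lt_aleph_one

theorem nat_iSup_lt_omega1 (f : ℕ → Ordinal.{u}) (hf : ∀ n, f n < ω1) : (⨆ n, f n) < ω1 := by
  apply Ordinal.iSup_lt_ord_lift _ hf
  rw [omega1_cof]
  simpa using Cardinal.aleph0_lt_aleph_one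

theorem bddAbove_of_lt_omega1 {s : Set Ordinal.{u}} (h : s ⊆ Set.Iio ω1) : BddAbove s :=
  ⟨ω1, fun x hx => (h hx).le⟩

/-- sup of a strictly increasing ℕ-chain is a limit ordinal. -/
theorem isLimit_nat_iSup {f : ℕ → Ordinal.{u}} (hf : ∀ n, f n < f (n+1)) :
    Order.IsSuccLimit (⨆ n, f n) := by
  have hb : BddAbove (Set.range f) := Ordinal.bddAbove_range f
  have hle : ∀ n, f n < ⨆ n, f n := fun n =>
    lt_of_lt_of_le (hf n) (le_ciSup hb (n+1))
  rw [Ordinal.isSuccLimit_iff, Order.isSuccPrelimit_iff_succ_lt]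
  constructor
  · intro h0
    exact absurd (h0 ▸ hle 0) (not_lt_of_ge zero_le)
  · intro a ha
    obtain ⟨n, hn⟩ := (lt_ciSup_iff hb).mp ha
    exact (Order.succ_le_of_lt hn).trans_lt (hle n)

-- ## Limit points and clubs

theorem limitPt_exists_between {S : Set Ordinal.{u}} {γ : Ordinal.{u}}
    (h : IsLimitPt S γ) {β : Ordinal.{u}} (hβ : β < γ) : ∃ s ∈ S, β < s ∧ s < γ := by
  by_contra hcon
  push_neg at hcon
  have hb : ∀ x ∈ S ∩ Set.Iio γ, x ≤ β := by
    rintro x ⟨hxS, hxγ⟩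
    by_contra hx
    push_neg at hx
    exact absurd hxγ (not_lt.mpr ((hcon x hxS hx)))
  have hne : (S ∩ Set.Iio γ).Nonempty := by
    by_contra hne
    rw [Set.not_nonempty_iff_eq_empty] at hne
    have := h.2
    rw [hne] at this
    simp [csSup_empty] at this
    exact absurd this.symm (Ne.symm h.1.ne')
  have : γ ≤ β := h.2.le.trans (csSup_le hne hb)
  exact absurd hβ (not_lt.mpr this)

theorem isLimit_of_limitPt {S : Set Ordinal.{u}} {γ : Ordinal.{u}}
    (h : IsLimitPt S γ) : Order.IsSuccLimit γ := by
  refine Ordinal.isSuccLimit_iff.mpr ⟨h.1.ne', Order.isSuccPrelimit_of_succ_lt fun β hβ => ?_⟩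
  obtain ⟨s, _, hs1, hs2⟩ := limitPt_exists_between h hβ
  exact lt_of_le_of_lt (Order.succ_le_of_lt hs1) hs2

theorem isLimitPt_of_forall_lt {S : Set Ordinal.{u}} {x : Ordinal.{u}} (hx : 0 < x)
    (h : ∀ a < x, ∃ d ∈ S, a < d ∧ d < x) : IsLimitPt S x := by
  refine ⟨hx, ?_⟩
  obtain ⟨d0, hd0, _, hd0x⟩ := h 0 hx
  have hne : (S ∩ Set.Iio x).Nonempty := ⟨d0, hd0, hd0x⟩
  have hub : ∀ a ∈ S ∩ Set.Iio x, a ≤ x := fun a ha => ha.2.le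
  have hle : sSup (S ∩ Set.Iio x) ≤ x := csSup_le hne hub
  rcases eq_or_lt_of_le hle with heq | hlt
  · exact heq.symm
  · obtain ⟨d, hd, hd1, hd2⟩ := h _ hlt
    have : d ≤ sSup (S ∩ Set.Iio x) :=
      le_csSup ⟨x, fun y hy => hy.2.le⟩ ⟨hd, hd2⟩
    exact absurd (lt_of_lt_of_le hd1 this) (lt_irrefl _)

theorem clubIn_omega1_mem {D : Set Ordinal.{u}} (hD : IsClubIn D ω1) {x : Ordinal.{u}}
    (hx : x < ω1) (hx0 : 0 < x) (h : ∀ a < x, ∃ d ∈ D, a < d ∧ d < x) : x ∈ D :=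
  hD.2.2 x hx (isLimitPt_of_forall_lt hx0 h)

theorem clubIn_unbounded_strict {D : Set Ordinal.{u}} (hD : IsClubIn D ω1) {γ : Ordinal.{u}}
    (hγ : γ < ω1) : ∃ d ∈ D, γ < d ∧ d < ω1 := by
  obtain ⟨d, hd, hle⟩ := hD.2.1 (γ+1) (omega1_isLimit.succ_lt hγ)
  exact ⟨d, hd, lt_of_lt_of_le (Order.lt_succ γ) hle, hD.1 hd⟩

-- ## enumOrd of a club

theorem not_bddAbove_club_union {D : Set Ordinal.{u}} :
    ¬ BddAbove (D ∪ Set.Ici ω1) := by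
  rintro ⟨b, hb⟩
  have h1 : max b ω1 + 1 ∈ D ∪ Set.Ici ω1 :=
    Or.inr ((le_max_right b ω1).trans (Order.lt_succ _).le)
  have h2 := hb h1
  have : max b ω1 + 1 ≤ max b ω1 := h2.trans (le_max_left b ω1)
  exact absurd this (not_le.mpr (Order.lt_succ _))

theorem isClosed_club_union {D : Set Ordinal.{u}} (hD : IsClubIn D ω1) :
    IsClosed (D ∪ Set.Ici ω1) := by
  rw [Ordinal.isClosed_iff_iSup]
  intro ι hι f hf
  set a := ⨆ i, f i with ha
  have hbdd : BddAbove (Set.range f) := Ordinal.bddAbove_range f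
  by_cases hbig : ∃ i, ω1 ≤ f i
  · obtain ⟨i, hi⟩ := hbig
    exact Or.inr (hi.trans (le_ciSup hbdd i))
  · push_neg at hbig
    have hfD : ∀ i, f i ∈ D := by
      intro i
      rcases hf i with h | h
      · exact h
      · exact absurd (hbig i) (not_lt.mpr h)
    by_cases haω : ω1 ≤ a
    · exact Or.inr haω
    · push_neg at haω
      by_cases heq : ∃ i, f i = a
      · obtain ⟨i, hi⟩ := heq
        exact Or.inl (hi ▸ hfD i)
      · push_neg at heq
        have hlt : ∀ i, f i < a := fun i => lt_of_le_of_ne (le_ciSup hbdd i) (heq i)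
        have h0 : 0 < a := ((zero_le : (0:Ordinal) ≤ _)).trans_lt (hlt hι.some)
        refine Or.inl (clubIn_omega1_mem hD haω h0 ?_)
        intro b hb
        obtain ⟨i, hi⟩ := (lt_ciSup_iff hbdd).mp hb
        exact ⟨f i, hfD i, hi, hlt i⟩

theorem club_enumOrd_lt {D : Set Ordinal.{u}} (hD : IsClubIn D ω1) :
    ∀ ξ, ξ < ω1 → Ordinal.enumOrd (D ∪ Set.Ici ω1) ξ < ω1 := by
  intro ξ
  induction ξ using Ordinal.induction with
  | h ξ IH =>
    intro hξ
    have hb : Ordinal.bsup ξ (fun b _ => Ordinal.enumOrd (D ∪ Set.Ici ω1) b) < ω1 :=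
      bsup_lt_omega1 hξ _ (fun b hb' => IH b hb' (hb'.trans hξ))
    obtain ⟨d, hd, hlt, hdω⟩ := clubIn_unbounded_strict hD hb
    have : Ordinal.enumOrd (D ∪ Set.Ici ω1) ξ ≤ d :=
      Ordinal.enumOrd_le_of_forall_lt (Or.inl hd)
        (fun b hb' => lt_of_le_of_lt (Ordinal.le_bsup _ b hb') hlt)
    exact this.trans_lt hdω

theorem club_enumOrd_mem {D : Set Ordinal.{u}} (hD : IsClubIn D ω1)
    {ξ : Ordinal.{u}} (hξ : ξ < ω1) : Ordinal.enumOrd (D ∪ Set.Ici ω1) ξ ∈ D := by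
  rcases Ordinal.enumOrd_mem not_bddAbove_club_union ξ with h | h
  · exact h
  · exact absurd h (not_le.mpr (club_enumOrd_lt hD ξ hξ))

theorem club_enumOrd_isNormal {D : Set Ordinal.{u}} (hD : IsClubIn D ω1) :
    Order.IsNormal (Ordinal.enumOrd (D ∪ Set.Ici ω1)) :=
  (Ordinal.enumOrd_isNormal_iff_isClosed not_bddAbove_club_union).mpr (isClosed_club_union hD)

-- ## nice functions ω1 → ω1

def NiceFun (g : Ordinal.{u} → Ordinal.{u}) : Prop :=
  (∀ ξ < ω1, g ξ < ω1) ∧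
  (∀ ξ μ, ξ ≤ μ → μ < ω1 → g ξ ≤ g μ) ∧
  (∀ ν, ν < ω1 → Order.IsSuccLimit ν → ∀ a, (a < g ν ↔ ∃ ξ < ν, a < g ξ)) ∧
  (∀ γ < ω1, ∃ ξ < ω1, γ < g ξ)

theorem exists_isLimit_between {γ : Ordinal.{u}} (hγ : γ < ω1) :
    ∃ ν, γ < ν ∧ ν < ω1 ∧ Order.IsSuccLimit ν := by
  refine ⟨γ + Ordinal.omega0, ?_, ?_, Ordinal.isSuccLimit_add γ Ordinal.isSuccLimit_omega0⟩
  · exact (Ordinal.lt_add_iff Ordinal.omega0_ne_zero).mpr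
      ⟨0, Ordinal.omega0_pos, by simpa using le_refl γ⟩
  · rw [lt_omega1_iff_card, Ordinal.card_add]
    have h1 : γ.card ≤ Cardinal.aleph0 := lt_omega1_iff_card.mp hγ
    have h2 : Ordinal.card Ordinal.omega0 ≤ Cardinal.aleph0 := by
      simp [Ordinal.card_omega0]
    calc γ.card + Ordinal.omega0.card ≤ Cardinal.aleph0 + Cardinal.aleph0 :=
          add_le_add h1 h2
      _ = Cardinal.aleph0 := Cardinal.aleph0_add_aleph0

theorem niceFun_cofinal' {g : Ordinal.{u} → Ordinal.{u}} (hg : NiceFun g)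
    {γ : Ordinal.{u}} (hγ : γ < ω1) : ∃ ξ, ξ < ω1 ∧ γ < ξ ∧ γ < g ξ := by
  obtain ⟨ξ, hξ, hγξ⟩ := hg.2.2.2 γ hγ
  have hm : max ξ (γ+1) < ω1 := max_lt hξ (omega1_isLimit.succ_lt hγ)
  refine ⟨max ξ (γ+1), hm, lt_of_lt_of_le (Order.lt_succ γ) (le_max_right _ _), ?_⟩
  exact lt_of_lt_of_le hγξ (hg.2.1 ξ _ (le_max_left _ _) hm)

/-- The image of the limit ordinals under a nice function is club in `ω1`. -/
theorem niceFun_image_club {g : Ordinal.{u} → Ordinal.{u}} (hg : NiceFun g) :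
    IsClubIn {γ | ∃ ν, ν < ω1 ∧ Order.IsSuccLimit ν ∧ g ν = γ} ω1 := by
  obtain ⟨hlt, hmono, hlim, hcof⟩ := hg
  set D : Set Ordinal.{u} := {γ | ∃ ν, ν < ω1 ∧ Order.IsSuccLimit ν ∧ g ν = γ} with hDdef
  have hsub : D ⊆ Set.Iio ω1 := by
    rintro γ ⟨ν, hν, _, rfl⟩
    exact hlt ν hν
  refine ⟨hsub, ?_, ?_⟩
  · -- unbounded
    intro γ hγ
    obtain ⟨ξ, hξω, hγξ⟩ := hcof γ hγ
    obtain ⟨ν, hξν, hνω, hνlim⟩ := exists_isLimit_between hξω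
    refine ⟨g ν, ⟨ν, hνω, hνlim, rfl⟩, ?_⟩
    exact (hγξ.trans_le (hmono ξ ν hξν.le hνω)).le
  · -- closed
    intro γ hγω hpt
    set I : Set Ordinal.{u} := {ξ | ξ < ω1 ∧ g ξ < γ} with hIdef
    -- every element of D ∩ Iio γ gives an element of I
    have hDI : ∀ d ∈ D ∩ Set.Iio γ, ∃ ν ∈ I, g ν = d := by
      rintro d ⟨⟨ν, hν, _, rfl⟩, hd⟩
      exact ⟨ν, ⟨hν, hd⟩, rfl⟩
    have hne : (D ∩ Set.Iio γ).Nonempty := by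
      obtain ⟨s, hs, _, hsγ⟩ := limitPt_exists_between hpt hpt.1
      exact ⟨s, hs, hsγ⟩
    have hIne : I.Nonempty := by
      obtain ⟨d, hd⟩ := hne
      obtain ⟨ν, hν, _⟩ := hDI d hd
      exact ⟨ν, hν⟩
    -- I is bounded below ω1
    obtain ⟨ξ', hξ'ω, hγξ'⟩ := hcof γ hγω
    have hIbd : ∀ ξ ∈ I, ξ < ξ' := by
      rintro ξ ⟨hξω, hξγ⟩
      by_contra hcon
      push_neg at hcon
      exact absurd (hγξ'.trans_le (hmono ξ' ξ hcon hξω)) (not_lt.mpr hξγ.le)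
    have hbddI : BddAbove I := ⟨ξ', fun x hx => (hIbd x hx).le⟩
    -- I has no maximum
    have hnomax : ∀ m ∈ I, ∃ ξ ∈ I, m < ξ := by
      rintro m ⟨hmω, hmγ⟩
      by_contra hcon
      push_neg at hcon
      have hub : ∀ d ∈ D ∩ Set.Iio γ, d ≤ g m := by
        intro d hd
        obtain ⟨ν, hν, rfl⟩ := hDI d hd
        exact hmono ν m (not_lt.mp (fun hlt' => absurd (hcon ν hν) (not_le.mpr hlt'))) hmω
      have : γ ≤ g m := hpt.2.le.trans (csSup_le hne hub)
      exact absurd hmγ (not_lt.mpr this)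
    set ν' : Ordinal.{u} := sSup I with hν'def
    have hν'ω : ν' < ω1 := lt_of_le_of_lt (csSup_le hIne (fun x hx => (hIbd x hx).le)) hξ'ω
    have hIseg : ∀ ξ < ν', ξ ∈ I := by
      intro ξ hξ
      obtain ⟨ξ₂, hξ₂, hlt₂⟩ : ∃ ξ₂ ∈ I, ξ < ξ₂ := by
        by_contra hcon
        push_neg at hcon
        exact absurd (csSup_le hIne hcon) (not_le.mpr hξ)
      exact ⟨lt_trans hlt₂ hξ₂.1, lt_of_le_of_lt (hmono ξ ξ₂ hlt₂.le hξ₂.1) hξ₂.2⟩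
    have hν'notmem : ν' ∉ I := by
      intro hmem
      obtain ⟨ξ₂, hξ₂I, hgt⟩ := hnomax ν' hmem
      exact absurd (le_csSup hbddI hξ₂I) (not_le.mpr hgt)
    have hν'lim : Order.IsSuccLimit ν' := by
      rw [Ordinal.isSuccLimit_iff, Order.isSuccPrelimit_iff_succ_lt]
      constructor
      · obtain ⟨m, hm⟩ := hIne
        obtain ⟨ξ, hξI, hmξ⟩ := hnomax m hm
        exact (lt_of_le_of_lt ((zero_le : (0:Ordinal) ≤ m))
          (lt_of_lt_of_le hmξ (le_csSup hbddI hξI))).ne'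
      · intro β hβ
        obtain ⟨ξ, hξI, hβξ⟩ := hnomax β (hIseg β hβ)
        have h1 : Order.succ β ≤ ξ := Order.succ_le_of_lt hβξ
        have h2 : ξ ≤ ν' := le_csSup hbddI hξI
        rcases lt_or_eq_of_le (h1.trans h2) with h | h
        · exact h
        · exact absurd ((le_antisymm h2 (h ▸ h1)) ▸ hξI) hν'notmem
    have le1 : g ν' ≤ γ := by
      by_contra hcon
      push_neg at hcon
      obtain ⟨ξ, hξν', hγgξ⟩ := (hlim ν' hν'ω hν'lim γ).mp hcon
      exact absurd (hIseg ξ hξν').2 (not_lt.mpr hγgξ.le)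
    have le2 : γ ≤ g ν' := by
      refine hpt.2.le.trans (csSup_le hne ?_)
      rintro d hd
      obtain ⟨ν, hνI, rfl⟩ := hDI d hd
      exact hmono ν ν' (le_csSup hbddI hνI) hν'ω
    exact ⟨ν', hν'ω, hν'lim, le_antisymm le1 le2⟩

-- ## Good sequences (witnessing sequence data)

structure GoodSeq (δ : Ordinal.{u}) (N : Ordinal.{u} → Set Ordinal.{u})
    (e : Ordinal.{u} → Ordinal.{u}) : Prop where
  cnt : ∀ ξ < ω1, (N ξ).Countable ∧ N ξ ⊆ Set.Iio δ
  mono : ∀ ξ μ, ξ < μ → μ < ω1 → N ξ ⊆ N μ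
  cont : ∀ ν, ν < ω1 → Order.IsSuccLimit ν → N ν = ⋃ ξ ∈ Set.Iio ν, N ξ
  un : (⋃ ξ ∈ Set.Iio ω1, N ξ) = Set.Iio δ
  sec : ∀ ξ < ω1, N ξ ∩ Set.Iio ω1 = Set.Iio (e ξ)

namespace GoodSeq

variable {δ : Ordinal.{u}} {N : Ordinal.{u} → Set Ordinal.{u}} {e : Ordinal.{u} → Ordinal.{u}}

theorem e_lt (h : GoodSeq δ N e) {ξ : Ordinal.{u}} (hξ : ξ < ω1) : e ξ < ω1 := by
  apply lt_omega1_of_countable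
  rw [← h.sec ξ hξ]
  exact ((h.cnt ξ hξ).1).mono Set.inter_subset_left

theorem e_mono (h : GoodSeq δ N e) {ξ μ : Ordinal.{u}} (hξμ : ξ ≤ μ) (hμ : μ < ω1) : e ξ ≤ e μ := by
  rcases eq_or_lt_of_le hξμ with rfl | hlt
  · exact le_refl _
  · have hsub : Set.Iio (e ξ) ⊆ Set.Iio (e μ) := by
      rw [← h.sec ξ (hlt.trans hμ), ← h.sec μ hμ]
      exact Set.inter_subset_inter_left _ (h.mono ξ μ hlt hμ)
    by_contra hcon
    push_neg at hcon
    exact absurd (Set.mem_Iio.mp (hsub (Set.mem_Iio.mpr hcon))) (lt_irrefl _)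

theorem lt_e_limit (h : GoodSeq δ N e) {ν : Ordinal.{u}} (hν : ν < ω1) (hlim : Order.IsSuccLimit ν) (a : Ordinal.{u}) :
    a < e ν ↔ ∃ ξ < ν, a < e ξ := by
  have hset : Set.Iio (e ν) = ⋃ ξ ∈ Set.Iio ν, Set.Iio (e ξ) := by
    rw [← h.sec ν hν, h.cont ν hν hlim]
    ext x
    simp only [Set.mem_inter_iff, Set.mem_iUnion, Set.mem_Iio, exists_prop]
    constructor
    · rintro ⟨⟨ξ, hξ, hx⟩, hxω⟩
      refine ⟨ξ, hξ, ?_⟩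
      rw [← Set.mem_Iio, ← h.sec ξ (hξ.trans hν)]
      exact ⟨hx, hxω⟩
    · rintro ⟨ξ, hξ, hx⟩
      have : x ∈ N ξ ∩ Set.Iio ω1 := by
        rw [h.sec ξ (hξ.trans hν)]
        exact hx
      exact ⟨⟨ξ, hξ, this.1⟩, this.2⟩
  constructor
  · intro ha
    have : a ∈ ⋃ ξ ∈ Set.Iio ν, Set.Iio (e ξ) := hset ▸ ha
    simpa using this
  · rintro ⟨ξ, hξ, ha⟩
    have : a ∈ ⋃ ξ ∈ Set.Iio ν, Set.Iio (e ξ) := by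
      simp only [Set.mem_iUnion, Set.mem_Iio, exists_prop]
      exact ⟨ξ, hξ, ha⟩
    rw [← hset] at this
    exact this

theorem e_cofinal (h : GoodSeq δ N e) (hδ : ω1 ≤ δ) {γ : Ordinal.{u}} (hγ : γ < ω1) : ∃ ξ < ω1, γ < e ξ := by
  have hγδ : γ ∈ Set.Iio δ := lt_of_lt_of_le hγ hδ
  rw [← h.un] at hγδ
  simp only [Set.mem_iUnion, Set.mem_Iio, exists_prop] at hγδ
  obtain ⟨ξ, hξ, hγN⟩ := hγδ
  refine ⟨ξ, hξ, ?_⟩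
  rw [← Set.mem_Iio, ← h.sec ξ hξ]
  exact ⟨hγN, hγ⟩

theorem niceFun_e (h : GoodSeq δ N e) (hδ : ω1 ≤ δ) : NiceFun e :=
  ⟨fun ξ hξ => h.e_lt hξ, fun ξ μ hξμ hμ => h.e_mono hξμ hμ,
   fun ν hν hlim a => h.lt_e_limit hν hlim a, fun γ hγ => h.e_cofinal hδ hγ⟩

end GoodSeq

-- ## nice function from a club enumeration

theorem niceFun_enumOrd {E : Set Ordinal.{u}} (hE : IsClubIn E ω1) :
    NiceFun (Ordinal.enumOrd (E ∪ Set.Ici ω1)) := by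
  have hnorm := club_enumOrd_isNormal hE
  refine ⟨fun ξ hξ => club_enumOrd_lt hE ξ hξ,
    fun ξ μ hξμ _ => hnorm.monotone hξμ,
    fun ν _ hlim a => hnorm.lt_iff_exists_lt hlim,
    fun γ hγ => ?_⟩
  exact ⟨γ + 1, omega1_isLimit.succ_lt hγ,
    lt_of_lt_of_le (Order.lt_succ γ) hnorm.strictMono.le_apply⟩

/-- composition: `e ∘ enumOrd (E ∪ Ici ω1)` is nice. -/
theorem GoodSeq.niceFun_comp {δ : Ordinal.{u}} {N : Ordinal.{u} → Set Ordinal.{u}}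
    {e : Ordinal.{u} → Ordinal.{u}} (h : GoodSeq δ N e) (hδ : ω1 ≤ δ)
    {E : Set Ordinal.{u}} (hE : IsClubIn E ω1) :
    NiceFun (fun ξ => e (Ordinal.enumOrd (E ∪ Set.Ici ω1) ξ)) := by
  have hnorm := club_enumOrd_isNormal hE
  have hc := niceFun_enumOrd hE
  set c := Ordinal.enumOrd (E ∪ Set.Ici ω1) with hcdef
  refine ⟨fun ξ hξ => h.e_lt (hc.1 ξ hξ),
    fun ξ μ hξμ hμ => h.e_mono (hnorm.monotone hξμ) (hc.1 μ hμ),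
    fun ν hν hlim a => ?_, fun γ hγ => ?_⟩
  · have hcν : c ν < ω1 := hc.1 ν hν
    have hcνlim : Order.IsSuccLimit (c ν) := hnorm.map_isSuccLimit hlim
    show a < e (c ν) ↔ ∃ ξ < ν, a < e (c ξ)
    rw [h.lt_e_limit hcν hcνlim a]
    constructor
    · rintro ⟨η, hη, ha⟩
      obtain ⟨ξ, hξν, hηξ⟩ := (hnorm.lt_iff_exists_lt hlim).mp hη
      exact ⟨ξ, hξν, lt_of_lt_of_le ha (h.e_mono hηξ.le (hc.1 ξ (hξν.trans hν)))⟩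
    · rintro ⟨ξ, hξν, ha⟩
      exact ⟨c ξ, hnorm.strictMono hξν, ha⟩
  · obtain ⟨η, hη, hγη⟩ := h.e_cofinal hδ hγ
    exact ⟨η, hη, lt_of_lt_of_le hγη (h.e_mono hnorm.strictMono.le_apply (hc.1 η hη))⟩

-- ## pullback of a club along e

theorem GoodSeq.pullback_club {δ : Ordinal.{u}} {N : Ordinal.{u} → Set Ordinal.{u}}
    {e : Ordinal.{u} → Ordinal.{u}} (h : GoodSeq δ N e) (hδ : ω1 ≤ δ)
    {D : Set Ordinal.{u}} (hD : IsClubIn D ω1) :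
    IsClubIn {ν : Ordinal.{u} | ν < ω1 ∧ Order.IsSuccLimit ν ∧ e ν ∈ D} ω1 := by
  set S : Set Ordinal.{u} := {ν : Ordinal.{u} | ν < ω1 ∧ Order.IsSuccLimit ν ∧ e ν ∈ D} with hSdef
  have hstep : ∀ x, x < ω1 → ∃ ξ, x < ξ ∧ ξ < ω1 ∧ ∃ d ∈ D, e x < d ∧ d < e ξ := by
    intro x hx
    obtain ⟨d, hdD, hed, hdω⟩ := clubIn_unbounded_strict hD (h.e_lt hx)
    have hmax : max d x < ω1 := max_lt hdω hx
    obtain ⟨ξ, hξω, hmξ, hmeξ⟩ := niceFun_cofinal' (h.niceFun_e hδ) hmax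
    exact ⟨ξ, lt_of_le_of_lt (le_max_right d x) hmξ, hξω,
      d, hdD, hed, lt_of_le_of_lt (le_max_left d x) hmeξ⟩
  refine ⟨fun ν hν => hν.1, ?_, ?_⟩
  · -- unbounded
    intro γ hγ
    set step : Ordinal.{u} → Ordinal.{u} :=
      fun prev => if hp : prev < ω1 then Classical.choose (hstep prev hp) else 0 with hstepdef
    have hstepval : ∀ x (hx : x < ω1), step x = Classical.choose (hstep x hx) :=
      fun x hx => dif_pos hx
    set f : ℕ → Ordinal.{u} := fun n => Nat.rec γ (fun _ prev => step prev) n with hfdef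
    have hf0 : f 0 = γ := rfl
    have hfs : ∀ n, f (n+1) = step (f n) := fun n => rfl
    have hinv : ∀ n, f n < ω1 ∧ f n < f (n+1) ∧
        ∃ d ∈ D, e (f n) < d ∧ d < e (f (n+1)) := by
      intro n
      induction n with
      | zero =>
        have hp : f 0 < ω1 := hγ
        have hval : f 1 = Classical.choose (hstep (f 0) hp) := (hfs 0).trans (hstepval _ hp)
        obtain ⟨h1, h2, h3⟩ := Classical.choose_spec (hstep (f 0) hp)
        exact ⟨hp, hval ▸ h1, hval ▸ h3⟩
      | succ n ih =>
        obtain ⟨hnω, hlt', hd'⟩ := ih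
        have hp : f (n+1) < ω1 := by
          have hval : f (n+1) = Classical.choose (hstep (f n) hnω) :=
            (hfs n).trans (hstepval _ hnω)
          obtain ⟨_, h2, _⟩ := Classical.choose_spec (hstep (f n) hnω)
          exact hval ▸ h2
        have hval : f (n+2) = Classical.choose (hstep (f (n+1)) hp) :=
          (hfs (n+1)).trans (hstepval _ hp)
        obtain ⟨h1, h2, h3⟩ := Classical.choose_spec (hstep (f (n+1)) hp)
        exact ⟨hp, hval ▸ h1, hval ▸ h3⟩
    have hbdd : BddAbove (Set.range f) := Ordinal.bddAbove_range f
    set ν : Ordinal.{u} := ⨆ n, f n with hνdef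
    have hνω : ν < ω1 := nat_iSup_lt_omega1 f (fun n => (hinv n).1)
    have hνlim : Order.IsSuccLimit ν := isLimit_nat_iSup (fun n => (hinv n).2.1)
    have hfν : ∀ n, f n < ν := fun n =>
      lt_of_lt_of_le (hinv n).2.1 (le_ciSup hbdd (n+1))
    have heD : e ν ∈ D := by
      refine clubIn_omega1_mem hD (h.e_lt hνω) ?_ ?_
      · obtain ⟨d, _, hed, hde⟩ := (hinv 0).2.2
        calc (0:Ordinal.{u}) ≤ d := (zero_le : (0:Ordinal) ≤ d)
          _ < e (f 1) := hde
          _ ≤ e ν := h.e_mono (hfν 1).le hνω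
      · intro a ha
        obtain ⟨ξ, hξν, haξ⟩ := (h.lt_e_limit hνω hνlim a).mp ha
        obtain ⟨n, hn⟩ := (lt_ciSup_iff hbdd).mp hξν
        obtain ⟨d, hdD, hed, hde⟩ := (hinv n).2.2
        refine ⟨d, hdD, ?_, ?_⟩
        · calc a < e ξ := haξ
            _ ≤ e (f n) := h.e_mono hn.le (hinv n).1
            _ < d := hed
        · calc d < e (f (n+1)) := hde
            _ ≤ e ν := h.e_mono (hfν (n+1)).le hνω
    exact ⟨ν, ⟨hνω, hνlim, heD⟩, le_of_lt (hf0 ▸ hfν 0)⟩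
  · -- closed
    intro γ hγω hpt
    have hγlim : Order.IsSuccLimit γ := isLimit_of_limitPt hpt
    refine ⟨hγω, hγlim, ?_⟩
    by_cases hcase : ∃ s ∈ S, s < γ ∧ e s = e γ
    · obtain ⟨s, hs, _, hse⟩ := hcase
      exact hse ▸ hs.2.2
    · push_neg at hcase
      have hstrict : ∀ s ∈ S, s < γ → e s < e γ :=
        fun s hs hsγ => lt_of_le_of_ne (h.e_mono hsγ.le hγω) (hcase s hs hsγ)
      refine clubIn_omega1_mem hD (h.e_lt hγω) ?_ ?_
      · obtain ⟨s, hsS, _, hsγ⟩ := limitPt_exists_between hpt hpt.1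
        exact lt_of_le_of_lt ((zero_le : (0:Ordinal) ≤ (e s))) (hstrict s hsS hsγ)
      · intro a ha
        obtain ⟨ξ, hξγ, haξ⟩ := (h.lt_e_limit hγω hγlim a).mp ha
        obtain ⟨s, hsS, hξs, hsγ⟩ := limitPt_exists_between hpt hξγ
        refine ⟨e s, hsS.2.2, ?_, hstrict s hsS hsγ⟩
        exact lt_of_lt_of_le haξ (h.e_mono hξs.le hsS.1)

-- ## the agreement club for two good sequences with the same union

theorem GoodSeq.exists_bound {δ : Ordinal.{u}} {NA NB : Ordinal.{u} → Set Ordinal.{u}}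
    {eA eB : Ordinal.{u} → Ordinal.{u}} (hA : GoodSeq δ NA eA) (hB : GoodSeq δ NB eB)
    {ξ : Ordinal.{u}} (hξ : ξ < ω1) : ∃ μ, μ < ω1 ∧ NA ξ ⊆ NB μ := by
  rcases (NA ξ).eq_empty_or_nonempty with hemp | hne
  · exact ⟨0, omega1_pos, by rw [hemp]; exact Set.empty_subset _⟩
  · obtain ⟨g, hg⟩ := Set.Countable.exists_eq_range ((hA.cnt ξ hξ).1) hne
    have hmem : ∀ n : ℕ, ∃ μ, μ < ω1 ∧ g n ∈ NB μ := by
      intro n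
      have : g n ∈ Set.Iio δ := (hA.cnt ξ hξ).2 (hg ▸ Set.mem_range_self n)
      rw [← hB.un] at this
      simpa using this
    choose m hm1 hm2 using hmem
    have hsup : (⨆ n, m n) < ω1 := nat_iSup_lt_omega1 m hm1
    refine ⟨(⨆ n, m n) + 1, omega1_isLimit.succ_lt hsup, ?_⟩
    intro x hx
    rw [hg] at hx
    obtain ⟨n, rfl⟩ := hx
    have hmn : m n < (⨆ n, m n) + 1 :=
      lt_of_le_of_lt (le_ciSup (Ordinal.bddAbove_range m) n) (Order.lt_succ _)
    exact hB.mono (m n) _ hmn (omega1_isLimit.succ_lt hsup) (hm2 n)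

theorem GoodSeq.agree_club {δ : Ordinal.{u}} {NA NB : Ordinal.{u} → Set Ordinal.{u}}
    {eA eB : Ordinal.{u} → Ordinal.{u}} (hA : GoodSeq δ NA eA) (hB : GoodSeq δ NB eB) :
    ∃ E : Set Ordinal.{u}, IsClubIn E ω1 ∧
      ∀ ν ∈ E, ν < ω1 ∧ Order.IsSuccLimit ν ∧ NA ν = NB ν ∧ eA ν = eB ν := by
  have hmA : ∀ ξ, ∃ μ, ξ < ω1 → (μ < ω1 ∧ NA ξ ⊆ NB μ) := by
    intro ξ
    by_cases hξ : ξ < ω1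
    · obtain ⟨μ, h1, h2⟩ := hA.exists_bound hB hξ
      exact ⟨μ, fun _ => ⟨h1, h2⟩⟩
    · exact ⟨0, fun h => absurd h hξ⟩
  have hmB : ∀ ξ, ∃ μ, ξ < ω1 → (μ < ω1 ∧ NB ξ ⊆ NA μ) := by
    intro ξ
    by_cases hξ : ξ < ω1
    · obtain ⟨μ, h1, h2⟩ := hB.exists_bound hA hξ
      exact ⟨μ, fun _ => ⟨h1, h2⟩⟩
    · exact ⟨0, fun h => absurd h hξ⟩
  choose mA hmA using hmA
  choose mB hmB using hmB
  set E : Set Ordinal.{u} :=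
    {ν | ν < ω1 ∧ Order.IsSuccLimit ν ∧ ∀ ξ < ν, mA ξ < ν ∧ mB ξ < ν} with hEdef
  have hEagree : ∀ ν ∈ E, ν < ω1 ∧ Order.IsSuccLimit ν ∧ NA ν = NB ν ∧ eA ν = eB ν := by
    rintro ν ⟨hνω, hνlim, hνcl⟩
    have hNeq : NA ν = NB ν := by
      apply Set.Subset.antisymm
      · rw [hA.cont ν hνω hνlim]
        intro x hx
        simp only [Set.mem_iUnion, Set.mem_Iio, exists_prop] at hx
        obtain ⟨ξ, hξν, hxN⟩ := hx
        have hξω : ξ < ω1 := hξν.trans hνω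
        exact hB.mono (mA ξ) ν (hνcl ξ hξν).1 hνω ((hmA ξ hξω).2 hxN)
      · rw [hB.cont ν hνω hνlim]
        intro x hx
        simp only [Set.mem_iUnion, Set.mem_Iio, exists_prop] at hx
        obtain ⟨ξ, hξν, hxN⟩ := hx
        have hξω : ξ < ω1 := hξν.trans hνω
        exact hA.mono (mB ξ) ν (hνcl ξ hξν).2 hνω ((hmB ξ hξω).2 hxN)
    have heeq : eA ν = eB ν := by
      apply Set.Iio_injective
      rw [← hA.sec ν hνω, ← hB.sec ν hνω, hNeq]
    exact ⟨hνω, hνlim, hNeq, heeq⟩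
  refine ⟨E, ⟨fun ν hν => hν.1, ?_, ?_⟩, hEagree⟩
  · -- unbounded
    intro γ hγ
    have hstep : ∀ x, x < ω1 → ∃ y, x < y ∧ y < ω1 ∧ ∀ ξ < x, mA ξ < y ∧ mB ξ < y := by
      intro x hx
      have hbs : Ordinal.bsup x (fun ξ _ => max (mA ξ) (mB ξ)) < ω1 := by
        apply bsup_lt_omega1 hx
        intro ξ hξ
        exact max_lt (hmA ξ (hξ.trans hx)).1 (hmB ξ (hξ.trans hx)).1
      refine ⟨max x (Ordinal.bsup x (fun ξ _ => max (mA ξ) (mB ξ))) + 1,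
        lt_of_le_of_lt (le_max_left _ _) (Order.lt_succ _),
        omega1_isLimit.succ_lt (max_lt hx hbs), ?_⟩
      intro ξ hξ
      have h1 : max (mA ξ) (mB ξ) ≤ Ordinal.bsup x (fun ξ _ => max (mA ξ) (mB ξ)) :=
        Ordinal.le_bsup _ ξ hξ
      have h2 : Ordinal.bsup x (fun ξ _ => max (mA ξ) (mB ξ)) <
          max x (Ordinal.bsup x (fun ξ _ => max (mA ξ) (mB ξ))) + 1 :=
        lt_of_le_of_lt (le_max_right _ _) (Order.lt_succ _)
      exact ⟨lt_of_le_of_lt ((le_max_left _ _).trans h1) h2,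
        lt_of_le_of_lt ((le_max_right _ _).trans h1) h2⟩
    set stepf : Ordinal.{u} → Ordinal.{u} :=
      fun x => if hx : x < ω1 then Classical.choose (hstep x hx) else 0 with hstepdef
    have hstepval : ∀ x (hx : x < ω1), stepf x = Classical.choose (hstep x hx) :=
      fun x hx => dif_pos hx
    set f : ℕ → Ordinal.{u} := fun n => Nat.rec γ (fun _ prev => stepf prev) n with hfdef
    have hfs : ∀ n, f (n+1) = stepf (f n) := fun n => rfl
    have hinv : ∀ n, f n < ω1 ∧ f n < f (n+1) ∧ ∀ ξ < f n, mA ξ < f (n+1) ∧ mB ξ < f (n+1) := by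
      intro n
      induction n with
      | zero =>
        have hval : f 1 = Classical.choose (hstep (f 0) hγ) := (hfs 0).trans (hstepval _ hγ)
        obtain ⟨h1, h2, h3⟩ := Classical.choose_spec (hstep (f 0) hγ)
        exact ⟨hγ, hval ▸ h1, hval ▸ h3⟩
      | succ n ih =>
        obtain ⟨hnω, hlt', _⟩ := ih
        have hp : f (n+1) < ω1 := by
          have hval : f (n+1) = Classical.choose (hstep (f n) hnω) :=
            (hfs n).trans (hstepval _ hnω)
          obtain ⟨_, h2, _⟩ := Classical.choose_spec (hstep (f n) hnω)
          exact hval ▸ h2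
        have hval : f (n+2) = Classical.choose (hstep (f (n+1)) hp) :=
          (hfs (n+1)).trans (hstepval _ hp)
        obtain ⟨h1, h2, h3⟩ := Classical.choose_spec (hstep (f (n+1)) hp)
        exact ⟨hp, hval ▸ h1, hval ▸ h3⟩
    have hbdd : BddAbove (Set.range f) := Ordinal.bddAbove_range f
    set ν : Ordinal.{u} := ⨆ n, f n with hνdef
    have hνω : ν < ω1 := nat_iSup_lt_omega1 f (fun n => (hinv n).1)
    have hνlim : Order.IsSuccLimit ν := isLimit_nat_iSup (fun n => (hinv n).2.1)
    have hfν : ∀ n, f n < ν := fun n =>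
      lt_of_lt_of_le (hinv n).2.1 (le_ciSup hbdd (n+1))
    refine ⟨ν, ⟨hνω, hνlim, ?_⟩, (hfν 0).le⟩
    intro ξ hξν
    obtain ⟨n, hn⟩ := (lt_ciSup_iff hbdd).mp hξν
    obtain ⟨h1, h2⟩ := (hinv n).2.2 ξ hn
    exact ⟨h1.trans (hfν (n+1)), h2.trans (hfν (n+1))⟩
  · -- closed
    intro γ hγω hpt
    have hγlim : Order.IsSuccLimit γ := isLimit_of_limitPt hpt
    refine ⟨hγω, hγlim, ?_⟩
    intro ξ hξγ
    obtain ⟨s, hsE, hξs, hsγ⟩ := limitPt_exists_between hpt hξγ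
    obtain ⟨h1, h2⟩ := hsE.2.2 ξ hξs
    exact ⟨h1.trans hsγ, h2.trans hsγ⟩

-- ## transfer of witnesses across club-equivalence

theorem witness_transfer {C : Ordinal.{u+1} → Set Ordinal.{u+1}} {A B : Set Ordinal.{u}}
    {δ : Ordinal.{u}} (hδ : ω1 ≤ δ) (hW : UpsilonWitness C A δ)
    {D : Set Ordinal.{u}} (hD : IsClubIn D ω1) (hAB : ∀ ν ∈ D, (ν ∈ A ↔ ν ∈ B)) :
    UpsilonWitness C B δ := by
  obtain ⟨N, e, hcnt, hmono, hcont, hun, hsec, hcond⟩ := hW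
  have hg : GoodSeq δ N e := ⟨hcnt, hmono, hcont, hun, hsec⟩
  have hS := hg.pullback_club hδ hD
  set S := {ν : Ordinal.{u} | ν < ω1 ∧ Order.IsSuccLimit ν ∧ e ν ∈ D} with hSdef
  set c := Ordinal.enumOrd (S ∪ Set.Ici ω1) with hc
  have hnorm := club_enumOrd_isNormal hS
  have hclt : ∀ ξ, ξ < ω1 → c ξ < ω1 := club_enumOrd_lt hS
  have hcmem : ∀ ξ, ξ < ω1 → c ξ ∈ S := fun ξ hξ => club_enumOrd_mem hS hξ
  refine ⟨fun ξ => N (c ξ), fun ξ => e (c ξ), ?_, ?_, ?_, ?_, ?_, ?_⟩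
  · exact fun ξ hξ => hcnt (c ξ) (hclt ξ hξ)
  · exact fun ξ μ hξμ hμ => hmono (c ξ) (c μ) (hnorm.strictMono hξμ) (hclt μ hμ)
  · intro ν hν hνlim
    have hcνω : c ν < ω1 := hclt ν hν
    have hcνlim : Order.IsSuccLimit (c ν) := hnorm.map_isSuccLimit hνlim
    show N (c ν) = ⋃ ξ ∈ Set.Iio ν, N (c ξ)
    rw [hcont (c ν) hcνω hcνlim]
    ext x
    simp only [Set.mem_iUnion, Set.mem_Iio, exists_prop]
    constructor
    · rintro ⟨η, hη, hx⟩
      obtain ⟨ξ, hξν, hηξ⟩ := (hnorm.lt_iff_exists_lt hνlim).mp hη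
      exact ⟨ξ, hξν, hmono η (c ξ) hηξ (hclt ξ (hξν.trans hν)) hx⟩
    · rintro ⟨ξ, hξν, hx⟩
      exact ⟨c ξ, hnorm.strictMono hξν, hx⟩
  · apply Set.Subset.antisymm
    · intro x hx
      simp only [Set.mem_iUnion, Set.mem_Iio, exists_prop] at hx
      obtain ⟨ξ, hξ, hx⟩ := hx
      exact (hcnt (c ξ) (hclt ξ hξ)).2 hx
    · intro x hx
      rw [← hun] at hx
      simp only [Set.mem_iUnion, Set.mem_Iio, exists_prop] at hx ⊢
      obtain ⟨η, hη, hx⟩ := hx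
      have hη1 : η + 1 < ω1 := omega1_isLimit.succ_lt hη
      have : η < c (η + 1) := lt_of_lt_of_le (Order.lt_succ η) hnorm.strictMono.le_apply
      exact ⟨η + 1, hη1, hmono η (c (η+1)) this (hclt _ hη1) hx⟩
  · exact fun ξ hξ => hsec (c ξ) (hclt ξ hξ)
  · intro ν hν hνlim
    obtain ⟨hcνω, hcνlim, heD⟩ := hcmem ν hν
    obtain ⟨μ₀, hμ₀, hiff⟩ := hcond (c ν) hcνω hcνlim
    obtain ⟨ξ₁, hξ₁ν, hμ₀ξ₁⟩ := (hnorm.lt_iff_exists_lt hνlim).mp hμ₀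
    refine ⟨ξ₁, hξ₁ν, ?_⟩
    intro ξ hξ₁ξ hξν
    have h1 : μ₀ < c ξ := hμ₀ξ₁.trans (hnorm.strictMono hξ₁ξ)
    have h2 : c ξ < c ν := hnorm.strictMono hξν
    exact ((hAB _ heD).symm.trans (hiff (c ξ) h1 h2))

theorem witness_same_delta {C : Ordinal.{u+1} → Set Ordinal.{u+1}} {A B : Set Ordinal.{u}}
    {δ : Ordinal.{u}} (hδ : ω1 ≤ δ) (hWA : UpsilonWitness C A δ) (hWB : UpsilonWitness C B δ) :
    ∃ D, IsClubIn D ω1 ∧ ∀ ν ∈ D, (ν ∈ A ↔ ν ∈ B) := by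
  obtain ⟨NA, eA, hcntA, hmonoA, hcontA, hunA, hsecA, hcondA⟩ := hWA
  obtain ⟨NB, eB, hcntB, hmonoB, hcontB, hunB, hsecB, hcondB⟩ := hWB
  have hgA : GoodSeq δ NA eA := ⟨hcntA, hmonoA, hcontA, hunA, hsecA⟩
  have hgB : GoodSeq δ NB eB := ⟨hcntB, hmonoB, hcontB, hunB, hsecB⟩
  obtain ⟨E, hE, hagree⟩ := hgA.agree_club hgB
  set c := Ordinal.enumOrd (E ∪ Set.Ici ω1) with hc
  have hnorm := club_enumOrd_isNormal hE
  have hclt : ∀ ξ, ξ < ω1 → c ξ < ω1 := club_enumOrd_lt hE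
  have hcmem : ∀ ξ, ξ < ω1 → c ξ ∈ E := fun ξ hξ => club_enumOrd_mem hE hξ
  have hnice : NiceFun (fun ξ => eA (c ξ)) := hgA.niceFun_comp hδ hE
  refine ⟨_, niceFun_image_club hnice, ?_⟩
  rintro γ ⟨ν, hνω, hνlim, rfl⟩
  have hcνω : c ν < ω1 := hclt ν hνω
  have hcνlim : Order.IsSuccLimit (c ν) := hnorm.map_isSuccLimit hνlim
  obtain ⟨_, _, hNeq, heeq⟩ := hagree (c ν) (hcmem ν hνω)
  obtain ⟨ν₀A, hν₀A, hiffA⟩ := hcondA (c ν) hcνω hcνlim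
  obtain ⟨ν₀B, hν₀B, hiffB⟩ := hcondB (c ν) hcνω hcνlim
  have hmax : max ν₀A ν₀B < c ν := max_lt hν₀A hν₀B
  obtain ⟨ξ, hξν, hmξ⟩ := (hnorm.lt_iff_exists_lt hνlim).mp hmax
  have hcξν : c ξ < c ν := hnorm.strictMono hξν
  have hcξω : c ξ < ω1 := hcξν.trans hcνω
  obtain ⟨_, _, hNηeq, _⟩ := hagree (c ξ) (hcmem ξ (hξν.trans hνω))
  have h1 := hiffA (c ξ) (lt_of_le_of_lt (le_max_left _ _) hmξ) hcξν
  have h2 := hiffB (c ξ) (lt_of_le_of_lt (le_max_right _ _) hmξ) hcξν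
  have h2' : (fun ξ => eA (c ξ)) ν ∈ B ↔
      w C (NA (c ξ) ∩ Set.Iio ω1) (NA (c ν) ∩ Set.Iio ω1) < w C (NA (c ξ)) (NA (c ν)) := by
    show eA (c ν) ∈ B ↔ _
    rw [heeq, hNeq, hNηeq]
    exact h2
  exact h1.trans h2'.symm

-- ## stationary sets and the Ulam matrix

def Stat (S : Set Ordinal.{u}) : Prop := ∀ D : Set Ordinal.{u}, IsClubIn D ω1 → (S ∩ D).Nonempty

theorem clubIn_iInter {D : ℕ → Set Ordinal.{u}} (h : ∀ n, IsClubIn (D n) ω1) :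
    IsClubIn (⋂ n, D n) ω1 := by
  refine ⟨fun x hx => (h 0).1 (Set.mem_iInter.mp hx 0), ?_, ?_⟩
  · -- unbounded
    intro γ hγ
    have hpick : ∀ (n : ℕ) (x : Ordinal.{u}), ∃ d, x < ω1 → (d ∈ D n ∧ x < d ∧ d < ω1) := by
      intro n x
      by_cases hx : x < ω1
      · obtain ⟨d, h1, h2, h3⟩ := clubIn_unbounded_strict (h n) hx
        exact ⟨d, fun _ => ⟨h1, h2, h3⟩⟩
      · exact ⟨0, fun hc => absurd hc hx⟩
    choose p hp using hpick
    set stepf : Ordinal.{u} → Ordinal.{u} :=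
      fun x => if hx : x < ω1 then ⨆ n, p n x else 0 with hstepdef
    have hstep : ∀ x, x < ω1 → x < stepf x ∧ stepf x < ω1 ∧ ∀ n, p n x ≤ stepf x := by
      intro x hx
      have hval : stepf x = ⨆ n, p n x := dif_pos hx
      have hle : ∀ n, p n x ≤ stepf x := by
        intro n
        rw [hval]
        exact le_ciSup (Ordinal.bddAbove_range _) n
      refine ⟨lt_of_lt_of_le (hp 0 x hx).2.1 (hle 0), ?_, hle⟩
      rw [hval]
      exact nat_iSup_lt_omega1 _ (fun n => (hp n x hx).2.2)
    set f : ℕ → Ordinal.{u} := fun n => Nat.rec γ (fun _ prev => stepf prev) n with hfdef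
    have hfs : ∀ n, f (n+1) = stepf (f n) := fun n => rfl
    have hinv : ∀ n, f n < ω1 ∧ f n < f (n+1) := by
      intro n
      induction n with
      | zero => exact ⟨hγ, (hfs 0) ▸ (hstep γ hγ).1⟩
      | succ n ih =>
        have hp1 : f (n+1) < ω1 := (hfs n) ▸ (hstep (f n) ih.1).2.1
        exact ⟨hp1, (hfs (n+1)) ▸ (hstep (f (n+1)) hp1).1⟩
    have hbdd : BddAbove (Set.range f) := Ordinal.bddAbove_range f
    set ν : Ordinal.{u} := ⨆ n, f n with hνdef
    have hνω : ν < ω1 := nat_iSup_lt_omega1 f (fun n => (hinv n).1)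
    have hfν : ∀ n, f n < ν := fun n =>
      lt_of_lt_of_le (hinv n).2 (le_ciSup hbdd (n+1))
    refine ⟨ν, ?_, (hfν 0).le⟩
    rw [Set.mem_iInter]
    intro n
    refine clubIn_omega1_mem (h n) hνω (lt_of_le_of_lt ((zero_le : (0:Ordinal) ≤ γ)) (hfν 0)) ?_
    intro a ha
    obtain ⟨k, hk⟩ := (lt_ciSup_iff hbdd).mp ha
    refine ⟨p n (f k), (hp n (f k) (hinv k).1).1, hk.trans (hp n (f k) (hinv k).1).2.1, ?_⟩
    calc p n (f k) ≤ stepf (f k) := (hstep (f k) (hinv k).1).2.2 n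
      _ = f (k+1) := (hfs k).symm
      _ < ν := hfν (k+1)
  · -- closed
    intro γ hγω hpt
    rw [Set.mem_iInter]
    intro n
    refine clubIn_omega1_mem (h n) hγω hpt.1 ?_
    intro a ha
    obtain ⟨s, hs, has, hsγ⟩ := limitPt_exists_between hpt ha
    exact ⟨s, Set.mem_iInter.mp hs n, has, hsγ⟩

theorem stat_iUnion {S : ℕ → Set Ordinal.{u}} (hst : Stat (⋃ n, S n)) : ∃ n, Stat (S n) := by
  by_contra hcon
  push_neg at hcon
  have : ∀ n, ∃ D, IsClubIn D ω1 ∧ S n ∩ D = ∅ := by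
    intro n
    have h' := hcon n
    rw [Stat] at h'
    push_neg at h'
    obtain ⟨D, hD1, hD2⟩ := h'
    exact ⟨D, hD1, hD2⟩
  choose Dn hDn1 hDn2 using this
  obtain ⟨x, hx1, hx2⟩ := hst _ (clubIn_iInter hDn1)
  obtain ⟨n, hn⟩ := Set.mem_iUnion.mp hx1
  have : x ∈ S n ∩ Dn n := ⟨hn, Set.mem_iInter.mp hx2 n⟩
  rw [hDn2 n] at this
  exact this

theorem not_countable_Iio_omega1 : ¬ (Set.Iio ω1.{u}).Countable := by
  intro h
  exact absurd (lt_omega1_of_countable h) (lt_irrefl _)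

/-- The Ulam-matrix argument: there is an uncountable index set `X` and pairwise
disjoint stationary sets `T α` for `α ∈ X`. -/
theorem exists_disjoint_stationary_family :
    ∃ (X : Set Ordinal.{u}) (T : Ordinal.{u} → Set Ordinal.{u}),
      ¬ X.Countable ∧ (∀ α ∈ X, Stat (T α) ∧ T α ⊆ Set.Iio ω1) ∧
      (∀ α β : Ordinal.{u}, ∀ x, x ∈ T α ∩ T β → α = β) := by
  -- injections into ℕ
  have hinj : ∀ β : Ordinal.{u}, ∃ F : Ordinal.{u} → ℕ,
      β < ω1 → ∀ x y, x < β → y < β → F x = F y → x = y := by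
    intro β
    by_cases hβ : β < ω1
    · have : Countable ↥(Set.Iio β) := Set.countable_coe_iff.mpr (countable_Iio_of_lt hβ)
      obtain ⟨g, hg⟩ := Countable.exists_injective_nat ↥(Set.Iio β)
      refine ⟨fun x => if hx : x < β then g ⟨x, hx⟩ else 0, fun _ x y hx hy hxy => ?_⟩
      simp only [dif_pos hx, dif_pos hy] at hxy
      exact Subtype.ext_iff.mp (hg hxy)
    · exact ⟨fun _ => 0, fun h => absurd h hβ⟩
  choose F hF using hinj
  set U : ℕ → Ordinal.{u} → Set Ordinal.{u} :=
    fun n α => {β | α < β ∧ β < ω1 ∧ F β α = n} with hUdef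
  -- for each α < ω1, some U n α is stationary
  have hstat : ∀ α, α < ω1 → ∃ n, Stat (U n α) := by
    intro α hα
    apply stat_iUnion
    intro D hD
    obtain ⟨d, hdD, hαd, hdω⟩ := clubIn_unbounded_strict hD hα
    refine ⟨d, ?_, hdD⟩
    rw [Set.mem_iUnion]
    exact ⟨F d α, hαd, hdω, rfl⟩
  -- pigeonhole
  have hcover : Set.Iio ω1.{u} ⊆ ⋃ n, {α | α < ω1 ∧ Stat (U n α)} := by
    intro α hα
    obtain ⟨n, hn⟩ := hstat α hα
    exact Set.mem_iUnion.mpr ⟨n, hα, hn⟩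
  have hX : ∃ n, ¬ {α | α < ω1 ∧ Stat (U n α)}.Countable := by
    by_contra hcon
    push_neg at hcon
    exact not_countable_Iio_omega1 ((Set.countable_iUnion hcon).mono hcover)
  obtain ⟨n₀, hn₀⟩ := hX
  refine ⟨{α | α < ω1 ∧ Stat (U n₀ α)}, U n₀, hn₀, ?_, ?_⟩
  · rintro α ⟨hαω, hαst⟩
    exact ⟨hαst, fun β hβ => hβ.2.1⟩
  · rintro α β x ⟨⟨hαx, hxω, hFα⟩, ⟨hβx, _, hFβ⟩⟩
    exact hF x hxω α β hαx hβx (hFα.trans hFβ.symm)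

-- ## cardinal arithmetic

theorem two_power_aleph_one_le {g : Set Ordinal.{u} → Ordinal.{u}}
    (hlt : ∀ A, A ⊆ Set.Iio ω1 → g A < ω2)
    (hinj : ∀ A B, A ⊆ Set.Iio ω1 → B ⊆ Set.Iio ω1 → g A = g B →
      ∃ D, IsClubIn D ω1 ∧ ∀ ν ∈ D, (ν ∈ A ↔ ν ∈ B)) :
    (2 : Cardinal.{u+1}) ^ Cardinal.aleph 1 ≤ Cardinal.aleph 2 := by
  obtain ⟨X, T, hXunc, hT, hdisj⟩ := exists_disjoint_stationary_family.{u}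
  set SA : Set ↥X → Set Ordinal.{u} :=
    fun s => {γ | ∃ a : ↥X, a ∈ s ∧ γ ∈ T a.val} with hSAdef
  have hSAsub : ∀ s, SA s ⊆ Set.Iio ω1 := by
    rintro s γ ⟨a, _, hγ⟩
    exact (hT a.val a.property).2 hγ
  set Φ : Set ↥X → ↥(Set.Iio ω2.{u}) := fun s => ⟨g (SA s), hlt _ (hSAsub s)⟩ with hΦdef
  have hsub : ∀ s t, g (SA s) = g (SA t) → s ⊆ t := by
    intro s t heq a ha
    obtain ⟨D, hD, hag⟩ := hinj _ _ (hSAsub s) (hSAsub t) heq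
    obtain ⟨x, hxT, hxD⟩ := (hT a.val a.property).1 D hD
    have hxs : x ∈ SA s := ⟨a, ha, hxT⟩
    have hxt : x ∈ SA t := (hag x hxD).mp hxs
    obtain ⟨b, hb, hxTb⟩ := hxt
    have hab : a.val = b.val := hdisj a.val b.val x ⟨hxT, hxTb⟩
    exact (Subtype.ext hab) ▸ hb
  have hΦinj : Function.Injective Φ := by
    intro s t h
    have heq : g (SA s) = g (SA t) := congrArg Subtype.val h
    exact Set.Subset.antisymm (hsub s t heq) (hsub t s heq.symm)
  have h1 : Cardinal.mk (Set ↥X) ≤ Cardinal.mk ↥(Set.Iio ω2.{u}) :=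
    Cardinal.mk_le_of_injective hΦinj
  have h2 : Cardinal.mk ↥(Set.Iio ω2.{u}) = Cardinal.aleph 2 := by
    rw [Ordinal.mk_Iio_ordinal]
    rw [show ω2.{u} = (Cardinal.aleph 2).ord from rfl, Cardinal.card_ord, Cardinal.lift_aleph,
      Ordinal.lift_ofNat]
  have h3 : Cardinal.aleph 1 ≤ Cardinal.mk ↥X := by
    rw [← Set.countable_coe_iff, ← Cardinal.mk_le_aleph0_iff] at hXunc
    rw [← Cardinal.succ_aleph0]
    exact Order.succ_le_of_lt (not_le.mp hXunc)
  calc (2 : Cardinal.{u+1}) ^ Cardinal.aleph 1 ≤ 2 ^ Cardinal.mk ↥X :=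
        Cardinal.power_le_power_left two_ne_zero h3
    _ = Cardinal.mk (Set ↥X) := Cardinal.mk_set.symm
    _ ≤ Cardinal.aleph 2 := h2 ▸ h1

universe v

theorem aleph_two_eq_succ : (Cardinal.aleph 2 : Cardinal.{v}) = Order.succ (Cardinal.aleph 1) := by
  rw [← Cardinal.aleph_succ]
  congr 1
  rw [← Ordinal.add_one_eq_succ]
  norm_num

theorem aleph_two_le_two_power : (Cardinal.aleph 2 : Cardinal.{v}) ≤ 2 ^ Cardinal.aleph 1 := by
  rw [aleph_two_eq_succ]
  exact Order.succ_le_of_lt (Cardinal.cantor _)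

theorem two_power_aleph_one_transfer
    (h : (2 : Cardinal.{u+1}) ^ Cardinal.aleph 1 = Cardinal.aleph 2) :
    (2 : Cardinal.{v}) ^ Cardinal.aleph 1 = Cardinal.aleph 2 := by
  refine le_antisymm ?_ aleph_two_le_two_power
  rw [← Cardinal.lift_le.{u+1}, Cardinal.lift_two_power, Cardinal.lift_aleph, Cardinal.lift_aleph,
    Ordinal.lift_one, Ordinal.lift_ofNat]
  have hlift := congrArg (Cardinal.lift.{v}) h
  rw [Cardinal.lift_two_power, Cardinal.lift_aleph, Cardinal.lift_aleph, Ordinal.lift_one,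
    Ordinal.lift_ofNat] at hlift
  exact le_of_eq hlift

/-- assuming `υ_AC`, the map `[A] ↦ δ_[A]` (least witnessing `δ`) is
well defined on `P(ω₁)/NS` and injective into `ω₂`; consequently `2^{ω₁} = ω₂`. -/
theorem upsilonAC_wellordering
    (C : Ordinal.{u+1} → Set Ordinal.{u+1}) (hC : IsLadder C)
    (hυ : ∀ A : Set Ordinal.{u}, A ⊆ Set.Iio ω1 →
      ∃ δ, ω1 ≤ δ ∧ δ < ω2 ∧ UpsilonWitness C A δ) :
    (∃ f : Set Ordinal.{u} → Ordinal.{u},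
      (∀ A, A ⊆ Set.Iio ω1 →
        ω1 ≤ f A ∧ f A < ω2 ∧ UpsilonWitness C A (f A) ∧
          ∀ δ', ω1 ≤ δ' → UpsilonWitness C A δ' → f A ≤ δ') ∧
      ∀ A B : Set Ordinal.{u}, A ⊆ Set.Iio ω1 → B ⊆ Set.Iio ω1 →
        (f A = f B ↔ ∃ D, IsClubIn D ω1 ∧ ∀ ν ∈ D, (ν ∈ A ↔ ν ∈ B))) ∧
    2 ^ Cardinal.aleph 1 = Cardinal.aleph 2 := by
  classical
  set W : Set Ordinal.{u} → Set Ordinal.{u} :=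
    fun A => {δ | ω1 ≤ δ ∧ UpsilonWitness C A δ} with hWdef
  set f : Set Ordinal.{u} → Ordinal.{u} := fun A => sInf (W A) with hfdef
  have hne : ∀ A, A ⊆ Set.Iio ω1 → (W A).Nonempty := by
    intro A hA
    obtain ⟨δ, h1, _, h3⟩ := hυ A hA
    exact ⟨δ, h1, h3⟩
  have hprops : ∀ A, A ⊆ Set.Iio ω1 →
      ω1 ≤ f A ∧ f A < ω2 ∧ UpsilonWitness C A (f A) ∧
      ∀ δ', ω1 ≤ δ' → UpsilonWitness C A δ' → f A ≤ δ' := by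
    intro A hA
    have hmem : f A ∈ W A := csInf_mem (hne A hA)
    obtain ⟨δ, h1, h2, h3⟩ := hυ A hA
    refine ⟨hmem.1, lt_of_le_of_lt (csInf_le (OrderBot.bddBelow _) ⟨h1, h3⟩) h2, hmem.2, ?_⟩
    intro δ' h1' h2'
    exact csInf_le (OrderBot.bddBelow _) ⟨h1', h2'⟩
  refine ⟨⟨f, hprops, ?_⟩, ?_⟩
  · intro A B hA hB
    constructor
    · intro heq
      have hPA := hprops A hA
      have hPB := hprops B hB
      have hWB : UpsilonWitness C B (f A) := by rw [heq]; exact hPB.2.2.1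
      exact witness_same_delta hPA.1 hPA.2.2.1 hWB
    · rintro ⟨D, hD, hAB⟩
      have hWeq : W A = W B := by
        ext δ
        constructor
        · rintro ⟨hδ, hw⟩
          exact ⟨hδ, witness_transfer hδ hw hD hAB⟩
        · rintro ⟨hδ, hw⟩
          exact ⟨hδ, witness_transfer hδ hw hD (fun ν hν => (hAB ν hν).symm)⟩
      show sInf (W A) = sInf (W B)
      rw [hWeq]
  · apply two_power_aleph_one_transfer.{u}
    refine le_antisymm ?_ aleph_two_le_two_power
    apply two_power_aleph_one_le (g := f)
    · exact fun A hA => (hprops A hA).2.1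
    · intro A B hA hB heq
      have hPA := hprops A hA
      have hPB := hprops B hB
      have hWB : UpsilonWitness C B (f A) := by rw [heq]; exact hPB.2.2.1
      exact witness_same_delta hPA.1 hPA.2.2.1 hWB
end
end
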